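/- Let λ ∈ ℝ with λ > -1/2, and for u ∈ [-1,1] define h(u) := μ_λ({t ∈ [-1,1] : t > u}) - μ_{λ+1}({t ∈ [-1,1] : t > u}). Then h(u) ≤ 0 for all u ∈ [-1,0] and h(u) ≥ 0 for all u ∈ [0,1]. -/

import Mathlib

open MeasureTheory

/-- The normalizing constant `c_m = Γ(m/2+1)/(2 Γ(1/2) Γ(m/2+1/2))`. -/
noncomputable def cConst (m : ℝ) : ℝ :=
  Real.Gamma (m / 2 + 1) / (2 * Real.Gamma (1 / 2) * Real.Gamma (m / 2 + 1 / 2))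

/-- The probability measure `μ_λ` on `[-1,1]` with density `2 c_{2λ} (1-t²)^{λ-1/2}`
with respect to Lebesgue measure. -/
noncomputable def muMeasure (l : ℝ) : Measure ℝ :=
  (volume.restrict (Set.Icc (-1 : ℝ) 1)).withDensity
    (fun t => ENNReal.ofReal (2 * cConst (2 * l) * (1 - t ^ 2) ^ (l - 1 / 2)))

/-!
The Gamma recurrence `c_{2λ+2} (2λ + 1) = c_{2λ} (2λ + 2)` makes the difference of the densities
of `μ_{λ+1}` and `μ_λ` an exact derivative, that of `2 (c_{2λ+2} - c_{2λ}) t (1 - t²)^{λ + 1/2}`,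
which vanishes at `t = 1`. Hence `h(u) = 2 (c_{2λ+2} - c_{2λ}) u (1 - u²)^{λ + 1/2}`, and since
`c_{2λ} < c_{2λ+2}` this has the sign of `u`.
-/

open Set

lemma cConst_pos {m : ℝ} (hm : -1 < m) : 0 < cConst m := by
  have h₁ : 0 < Real.Gamma (m / 2 + 1) := Real.Gamma_pos_of_pos (by linarith)
  have h₂ : 0 < Real.Gamma (1 / 2) := Real.Gamma_pos_of_pos (by norm_num)
  have h₃ : 0 < Real.Gamma (m / 2 + 1 / 2) := Real.Gamma_pos_of_pos (by linarith)
  unfold cConst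
  positivity

lemma cConst_add_two_mul {m : ℝ} (hm : -1 < m) :
    cConst (m + 2) * (m + 1) = cConst m * (m + 2) := by
  have h₂ : 0 < Real.Gamma (1 / 2) := Real.Gamma_pos_of_pos (by norm_num)
  have h₃ : 0 < Real.Gamma (m / 2 + 1 / 2) := Real.Gamma_pos_of_pos (by linarith)
  unfold cConst
  rw [show (m + 2) / 2 + 1 = (m / 2 + 1) + 1 by ring,
    show (m + 2) / 2 + 1 / 2 = (m / 2 + 1 / 2) + 1 by ring,
    Real.Gamma_add_one (s := m / 2 + 1) (by linarith),
    Real.Gamma_add_one (s := m / 2 + 1 / 2) (by linarith)]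
  have h₄ : 0 < m / 2 + 1 / 2 := by linarith
  rw [div_mul_eq_mul_div, div_mul_eq_mul_div, div_eq_div_iff (by positivity) (by positivity)]
  ring

lemma cConst_lt_cConst_add_two {m : ℝ} (hm : -1 < m) : cConst m < cConst (m + 2) := by
  have hrec := cConst_add_two_mul hm
  have hpos := cConst_pos hm
  nlinarith

lemma one_sub_sq_rpow_le {t : ℝ} (p : ℝ) (ht : t ∈ Icc (-1) 1) :
    (1 - t ^ 2) ^ p ≤ max ((2 : ℝ) ^ p) 1 * ((1 - t) ^ p + (1 + t) ^ p) := by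
  obtain ⟨ht₁, ht₂⟩ := ht
  have rpow_le_of_mem_Icc : ∀ x ∈ Icc (1 : ℝ) 2, x ^ p ≤ max ((2 : ℝ) ^ p) 1 := by
    rintro x ⟨hx₁, hx₂⟩
    rcases le_total 0 p with hp | hp
    · exact (Real.rpow_le_rpow (by linarith) hx₂ hp).trans (le_max_left _ _)
    · exact (Real.rpow_le_one_of_one_le_of_nonpos hx₁ hp).trans (le_max_right _ _)
  have hC : 0 ≤ max ((2 : ℝ) ^ p) 1 := le_max_of_le_right zero_le_one
  have hm : 0 ≤ (1 - t) ^ p := Real.rpow_nonneg (by linarith) p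
  have hp : 0 ≤ (1 + t) ^ p := Real.rpow_nonneg (by linarith) p
  rw [show 1 - t ^ 2 = (1 - t) * (1 + t) by ring, Real.mul_rpow (by linarith) (by linarith)]
  -- of the two factors `1 ± t`, the one lying in `[1, 2]` is bounded by the constant
  rcases le_total 0 t with ht | ht
  · have := rpow_le_of_mem_Icc (1 + t) ⟨by linarith, by linarith⟩
    nlinarith
  · have := rpow_le_of_mem_Icc (1 - t) ⟨by linarith, by linarith⟩
    nlinarith

lemma intervalIntegrable_one_sub_sq_rpow {p : ℝ} (hp : -1 < p) :
    IntervalIntegrable (fun t : ℝ => (1 - t ^ 2) ^ p) volume (-1) 1 := by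
  have hm : IntervalIntegrable (fun t : ℝ => (1 - t) ^ p) volume (-1) 1 := by
    have := (intervalIntegral.intervalIntegrable_rpow' (a := 2) (b := 0) hp).comp_sub_left 1
    norm_num at this
    exact this
  have hp : IntervalIntegrable (fun t : ℝ => (1 + t) ^ p) volume (-1) 1 := by
    have := (intervalIntegral.intervalIntegrable_rpow' (a := 0) (b := 2) hp).comp_add_left 1
    norm_num at this
    exact this
  refine ((hm.add hp).const_mul (max ((2 : ℝ) ^ p) 1)).mono_fun
    (by fun_prop : Measurable fun t : ℝ => (1 - t ^ 2) ^ p).aestronglyMeasurable ?_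
  rw [uIoc_of_le (by norm_num)]
  filter_upwards [ae_restrict_mem measurableSet_Ioc] with t ht
  have hle := one_sub_sq_rpow_le p (Ioc_subset_Icc_self ht)
  have hnn : 0 ≤ (1 - t ^ 2) ^ p := Real.rpow_nonneg (by nlinarith [ht.1, ht.2]) p
  rwa [Real.norm_of_nonneg hnn, Real.norm_of_nonneg (hnn.trans hle)]

lemma hasDerivAt_mul_one_sub_sq_rpow {t : ℝ} (q : ℝ) (ht : t ∈ Ioo (-1) 1) :
    HasDerivAt (fun t : ℝ => t * (1 - t ^ 2) ^ q)
      ((1 - t ^ 2) ^ q - 2 * q * t ^ 2 * (1 - t ^ 2) ^ (q - 1)) t := by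
  have hpos : 0 < 1 - t ^ 2 := by nlinarith [ht.1, ht.2]
  have hbase : HasDerivAt (fun t : ℝ => 1 - t ^ 2) (-(2 * t)) t := by
    simpa using (hasDerivAt_pow 2 t).const_sub 1
  refine ((hasDerivAt_id' t).fun_mul (hbase.rpow_const (p := q) (Or.inl hpos.ne'))).congr_deriv ?_
  ring

noncomputable def muDensity (l t : ℝ) : ℝ :=
  2 * cConst (2 * l) * (1 - t ^ 2) ^ (l - 1 / 2)

lemma intervalIntegrable_muDensity {l u : ℝ} (hl : -1 / 2 < l) (hu : u ∈ Icc (-1) 1) :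
    IntervalIntegrable (muDensity l) volume u 1 :=
  ((intervalIntegrable_one_sub_sq_rpow (by linarith)).const_mul _).mono_set
    (uIcc_subset_uIcc_right (mem_uIcc_of_le hu.1 hu.2))

lemma toReal_muMeasure_Icc_inter_Ioi {l u : ℝ} (hl : -1 / 2 < l) (hu : u ∈ Icc (-1) 1) :
    (muMeasure l (Icc (-1) 1 ∩ Ioi u)).toReal = ∫ t in u..1, muDensity l t := by
  obtain ⟨hu₁, hu₂⟩ := hu
  have hmeas : MeasurableSet (Icc (-1 : ℝ) 1 ∩ Ioi u) := measurableSet_Icc.inter measurableSet_Ioi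
  have hset : Icc (-1 : ℝ) 1 ∩ Ioi u ∩ Icc (-1) 1 = Ioc u 1 := by
    ext t
    simp only [mem_inter_iff, mem_Icc, mem_Ioi, mem_Ioc]
    constructor
    · rintro ⟨⟨⟨-, ht₁⟩, hut⟩, -⟩
      exact ⟨hut, ht₁⟩
    · rintro ⟨hut, ht₁⟩
      exact ⟨⟨⟨by linarith, ht₁⟩, hut⟩, by linarith, ht₁⟩
  rw [intervalIntegral.integral_of_le hu₂, muMeasure, withDensity_apply _ hmeas,
    Measure.restrict_restrict hmeas, hset,
    ← integral_toReal (by fun_prop) (ae_of_all _ fun _ => ENNReal.ofReal_lt_top)]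
  refine setIntegral_congr_fun measurableSet_Ioc fun t ht => ENNReal.toReal_ofReal ?_
  have := cConst_pos (show -1 < 2 * l by linarith)
  have : 0 ≤ 1 - t ^ 2 := by nlinarith [ht.1, ht.2]
  positivity

lemma toReal_muMeasure_sub_toReal_muMeasure_add_one {l u : ℝ} (hl : -1 / 2 < l)
    (hu : u ∈ Icc (-1) 1) :
    (muMeasure l (Icc (-1) 1 ∩ Ioi u)).toReal - (muMeasure (l + 1) (Icc (-1) 1 ∩ Ioi u)).toReal =
      2 * (cConst (2 * l + 2) - cConst (2 * l)) * (u * (1 - u ^ 2) ^ (l + 1 / 2)) := by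
  set A := 2 * (cConst (2 * l + 2) - cConst (2 * l))
  have hrec := cConst_add_two_mul (m := 2 * l) (by linarith)
  have hderiv : ∀ t ∈ Ioo u 1, HasDerivAt (fun t => -(A * (t * (1 - t ^ 2) ^ (l + 1 / 2))))
      (muDensity l t - muDensity (l + 1) t) t := by
    intro t ht
    have ht' : t ∈ Ioo (-1) 1 := ⟨by linarith [hu.1, ht.1], ht.2⟩
    have hpos : 0 < 1 - t ^ 2 := by nlinarith [ht'.1, ht'.2]
    refine ((hasDerivAt_mul_one_sub_sq_rpow (l + 1 / 2) ht').const_mul A).neg.congr_deriv ?_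
    unfold muDensity
    rw [show 2 * (l + 1) = 2 * l + 2 by ring, show l + 1 - 1 / 2 = l + 1 / 2 by ring,
      show l + 1 / 2 - 1 = l - 1 / 2 by ring, show l + 1 / 2 = 1 + (l - 1 / 2) by ring,
      Real.rpow_add hpos, Real.rpow_one]
    linear_combination (2 * t ^ 2 * (1 - t ^ 2) ^ (l - 1 / 2)) * hrec
  have hcont : Continuous fun t => -(A * (t * (1 - t ^ 2) ^ (l + 1 / 2))) := by
    fun_prop (disch := linarith)
  have hint := intervalIntegrable_muDensity hl hu
  have hint' := intervalIntegrable_muDensity (l := l + 1) (by linarith) hu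
  rw [toReal_muMeasure_Icc_inter_Ioi hl hu, toReal_muMeasure_Icc_inter_Ioi (by linarith) hu,
    ← intervalIntegral.integral_sub hint hint', intervalIntegral.integral_eq_sub_of_hasDerivAt_of_le
      hu.2 hcont.continuousOn hderiv (hint.sub hint')]
  norm_num [Real.zero_rpow (show l + 1 / 2 ≠ 0 by linarith)]

theorem stmt_16 (l : ℝ) (hl : -1 / 2 < l) :
    (∀ u ∈ Set.Icc (-1 : ℝ) 0,
      (muMeasure l (Set.Icc (-1 : ℝ) 1 ∩ Set.Ioi u)).toReal -
        (muMeasure (l + 1) (Set.Icc (-1 : ℝ) 1 ∩ Set.Ioi u)).toReal ≤ 0) ∧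
    (∀ u ∈ Set.Icc (0 : ℝ) 1,
      0 ≤ (muMeasure l (Set.Icc (-1 : ℝ) 1 ∩ Set.Ioi u)).toReal -
        (muMeasure (l + 1) (Set.Icc (-1 : ℝ) 1 ∩ Set.Ioi u)).toReal) := by
  have hA : 0 ≤ 2 * (cConst (2 * l + 2) - cConst (2 * l)) := by
    linarith [cConst_lt_cConst_add_two (m := 2 * l) (by linarith)]
  have hpow : ∀ u ∈ Icc (-1 : ℝ) 1, 0 ≤ (1 - u ^ 2) ^ (l + 1 / 2) := fun u hu =>
    Real.rpow_nonneg (by nlinarith [hu.1, hu.2]) _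
  constructor
  · rintro u ⟨hu₁, hu₂⟩
    have hu : u ∈ Icc (-1 : ℝ) 1 := ⟨hu₁, by linarith⟩
    rw [toReal_muMeasure_sub_toReal_muMeasure_add_one hl hu]
    exact mul_nonpos_of_nonneg_of_nonpos hA (mul_nonpos_of_nonpos_of_nonneg hu₂ (hpow u hu))
  · rintro u ⟨hu₁, hu₂⟩
    have hu : u ∈ Icc (-1 : ℝ) 1 := ⟨by linarith, hu₂⟩
    rw [toReal_muMeasure_sub_toReal_muMeasure_add_one hl hu]
    exact mul_nonneg hA (mul_nonneg hu₁ (hpow u hu))
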